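/- (Proposition 3.2(ii)) Suppose K is nonempty and there exists a maximizer z* of the convex relaxation (i.e., z* ∈ R_d(K) with z*_0 = 1 attaining f_mom) of the form z* = Σ_{j=1}^l λ_j [v_j*]_{2d} with λ_j ≥ 0 and v_j* ∈ K, such that p_i(v_1*) = p_i(v_2*) = ⋯ = p_i(v_l*) for every i ∈ [m]. Then the convex relaxation is tight, i.e., f_mom = f_max. -/

import Mathlib

open MvPolynomial Finset Filter Topology

noncomputable section

/-- Extended-real logarithm with the convention `log t = -∞` for `t ≤ 0`. -/
def elog (t : ℝ) : EReal := if 0 < t then ((Real.log t : ℝ) : EReal) else ⊥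

/-- The degree `|α|` of a multi-index `α`. -/
def mdeg {n : ℕ} (α : Fin n →₀ ℕ) : ℕ := ∑ i, α i

/-- The monomial vector `[x]_{2d}`, modeled as the function on multi-indices
whose `α`-entry is `x^α` for `|α| ≤ 2d` (and `0` above the truncation degree). -/
def monoVec {n : ℕ} (d : ℕ) (x : Fin n → ℝ) : (Fin n →₀ ℕ) → ℝ :=
  fun α => if mdeg α ≤ 2 * d then ∏ i, x i ^ α i else 0

/-- The pairing `⟨p, z⟩ = ∑_α p_α z_α`. -/
def pairing {n : ℕ} (p : MvPolynomial (Fin n) ℝ) (z : (Fin n →₀ ℕ) → ℝ) : ℝ :=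
  ∑ α ∈ p.support, p.coeff α * z α

/-- The moment cone `R_d(S)`. -/
def momentCone {n : ℕ} (d : ℕ) (S : Set (Fin n → ℝ)) : Set ((Fin n →₀ ℕ) → ℝ) :=
  {z | ∃ (l : ℕ) (lam : Fin l → ℝ) (v : Fin l → (Fin n → ℝ)),
    (∀ j, 0 ≤ lam j) ∧ (∀ j, v j ∈ S) ∧ z = ∑ j, lam j • monoVec d (v j)}

/-- `⌈t/2⌉` for a natural number `t`. -/
def ceilHalf (t : ℕ) : ℕ := (t + 1) / 2

/-- The objective `f(x) = ∑ᵢ aᵢ log pᵢ(x)` (with `log 0 = -∞`). -/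
def fObj {n m : ℕ} (a : Fin m → ℝ) (p : Fin m → MvPolynomial (Fin n) ℝ)
    (x : Fin n → ℝ) : EReal :=
  ∑ i, (a i : EReal) * elog (eval x (p i))

/-- `f_max`, the optimal value of the log-polynomial optimization problem. -/
def fMax {n m : ℕ} (a : Fin m → ℝ) (p : Fin m → MvPolynomial (Fin n) ℝ)
    (K : Set (Fin n → ℝ)) : EReal :=
  sSup (fObj a p '' K)

/-- The moment objective `∑ᵢ aᵢ log ⟨pᵢ, z⟩`. -/
def objVal {n m : ℕ} (a : Fin m → ℝ) (p : Fin m → MvPolynomial (Fin n) ℝ)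
    (z : (Fin n →₀ ℕ) → ℝ) : EReal :=
  ∑ i, (a i : EReal) * elog (pairing (p i) z)

/-- `f_mom`, the optimal value of the convex relaxation over `R_d(S) ∩ {z₀ = 1}`. -/
def fMom {n m : ℕ} (d : ℕ) (a : Fin m → ℝ) (p : Fin m → MvPolynomial (Fin n) ℝ)
    (S : Set (Fin n → ℝ)) : EReal :=
  sSup (objVal a p '' {z ∈ momentCone d S | z 0 = 1})

/-- `M_k[y] ⪰ 0`, encoded via quadratic forms whose coefficient vectors are
coefficient vectors of polynomials of degree at most `k`. -/
def momMatPSD {n : ℕ} (k : ℕ) (y : (Fin n →₀ ℕ) → ℝ) : Prop :=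
  ∀ q : MvPolynomial (Fin n) ℝ, q.totalDegree ≤ k →
    0 ≤ ∑ α ∈ q.support, ∑ β ∈ q.support, q.coeff α * q.coeff β * y (α + β)

/-- The `(α,β)` entry of the localizing matrix `L_c^{(k)}[y]`. -/
def locEntry {n : ℕ} (c : MvPolynomial (Fin n) ℝ) (y : (Fin n →₀ ℕ) → ℝ)
    (α β : Fin n →₀ ℕ) : ℝ :=
  ∑ γ ∈ c.support, c.coeff γ * y (γ + α + β)

/-- `L_c^{(k)}[y] = 0`. -/
def locMatZero {n : ℕ} (c : MvPolynomial (Fin n) ℝ) (k : ℕ)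
    (y : (Fin n →₀ ℕ) → ℝ) : Prop :=
  ∀ α β : Fin n →₀ ℕ, mdeg α ≤ k - ceilHalf c.totalDegree →
    mdeg β ≤ k - ceilHalf c.totalDegree → locEntry c y α β = 0

/-- `L_c^{(k)}[y] ⪰ 0`. -/
def locMatPSD {n : ℕ} (c : MvPolynomial (Fin n) ℝ) (k : ℕ)
    (y : (Fin n →₀ ℕ) → ℝ) : Prop :=
  ∀ q : MvPolynomial (Fin n) ℝ, q.totalDegree ≤ k - ceilHalf c.totalDegree →
    0 ≤ ∑ α ∈ q.support, ∑ β ∈ q.support, q.coeff α * q.coeff β * locEntry c y α β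

/-- Feasibility for the `k`-th order moment relaxation with equality constraint
polynomials `Eqs` and inequality constraint polynomials `Ineqs`. -/
def momFeasible {n : ℕ} (Eqs Ineqs : Set (MvPolynomial (Fin n) ℝ)) (k : ℕ)
    (y : (Fin n →₀ ℕ) → ℝ) : Prop :=
  y 0 = 1 ∧ momMatPSD k y ∧ (∀ c ∈ Eqs, locMatZero c k y) ∧ ∀ c ∈ Ineqs, locMatPSD c k y

/-- `f_mom,k`, the optimal value of the `k`-th order moment relaxation. -/
def fMomK {n m : ℕ} (a : Fin m → ℝ) (p : Fin m → MvPolynomial (Fin n) ℝ)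
    (Eqs Ineqs : Set (MvPolynomial (Fin n) ℝ)) (k : ℕ) : EReal :=
  sSup (objVal a p '' {y | momFeasible Eqs Ineqs k y})

/-- The value `f_γ` of the γ-program. -/
def fGamma {n m : ℕ} (a : Fin m → ℝ) (p : Fin m → MvPolynomial (Fin n) ℝ)
    (K : Set (Fin n → ℝ)) : EReal :=
  sInf {e : EReal | ∃ γ : Fin m → ℝ,
    (∀ i, ∀ x ∈ K, (a i : EReal) * elog (eval x (p i)) ≤ ((γ i : ℝ) : EReal)) ∧
    e = ((∑ i, γ i : ℝ) : EReal)}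

/-- A polynomial is a sum of squares. -/
def IsSOSPoly {n : ℕ} (σ : MvPolynomial (Fin n) ℝ) : Prop :=
  ∃ (t : ℕ) (r : Fin t → MvPolynomial (Fin n) ℝ), σ = ∑ j, (r j) ^ 2

/-- The set `Ideal[c_E] + QM[c_I]`. -/
def idealQM {n : ℕ} {ι : Type*} (E I : Finset ι) (c : ι → MvPolynomial (Fin n) ℝ) :
    Set (MvPolynomial (Fin n) ℝ) :=
  {q | ∃ (h : ι → MvPolynomial (Fin n) ℝ) (σ0 : MvPolynomial (Fin n) ℝ)
      (σ : ι → MvPolynomial (Fin n) ℝ),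
    IsSOSPoly σ0 ∧ (∀ j ∈ I, IsSOSPoly (σ j)) ∧
    q = (∑ j ∈ E, h j * c j) + σ0 + ∑ j ∈ I, σ j * c j}

/-!
Dirac moment vectors `[x]_{2d}` with `x ∈ K` are feasible for the relaxation and the
objective takes the value `f(x)` on them, so `f_max ≤ f_mom`. Conversely, if
`z* = Σⱼ λⱼ [vⱼ*]_{2d}` with `z*₀ = Σⱼ λⱼ = 1` and every `pᵢ` is constant on the `vⱼ*`,
then `⟨pᵢ, z*⟩ = Σⱼ λⱼ pᵢ(vⱼ*) = pᵢ(v₁*)`, so `f_mom = f(v₁*) ≤ f_max`.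
-/

section Moments

variable {n : ℕ}

lemma le_two_mul_of_ceilHalf_le {t d : ℕ} (h : ceilHalf t ≤ d) : t ≤ 2 * d := by
  unfold ceilHalf at h
  omega

lemma monoVec_zero (d : ℕ) (x : Fin n → ℝ) : monoVec d x 0 = 1 := by
  simp [monoVec, mdeg]

lemma pairing_monoVec {d : ℕ} {p : MvPolynomial (Fin n) ℝ}
    (hp : p.totalDegree ≤ 2 * d) (x : Fin n → ℝ) :
    pairing p (monoVec d x) = eval x p := by
  rw [eval_eq, pairing]
  refine sum_congr rfl fun α hα => ?_
  have hα_deg : mdeg α ≤ 2 * d := by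
    rw [mdeg, ← Finsupp.sum_fintype α (fun _ e => e) fun _ => rfl]
    exact (le_totalDegree hα).trans hp
  rw [monoVec, if_pos hα_deg]
  congr 1
  exact (prod_subset (subset_univ _)
    fun i _ hi => by simp [Finsupp.notMem_support_iff.mp hi]).symm

lemma pairing_sum_smul {l : ℕ} (p : MvPolynomial (Fin n) ℝ) (lam : Fin l → ℝ)
    (w : Fin l → (Fin n →₀ ℕ) → ℝ) :
    pairing p (∑ j, lam j • w j) = ∑ j, lam j * pairing p (w j) := by
  simp only [pairing, Finset.sum_apply, Pi.smul_apply, smul_eq_mul, mul_sum]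
  rw [sum_comm]
  exact sum_congr rfl fun _ _ => sum_congr rfl fun _ _ => by ring

lemma objVal_eq_fObj_of_pairing_eq {m : ℕ} (a : Fin m → ℝ)
    {p : Fin m → MvPolynomial (Fin n) ℝ} {z : (Fin n →₀ ℕ) → ℝ} {x : Fin n → ℝ}
    (h : ∀ i, pairing (p i) z = eval x (p i)) :
    objVal a p z = fObj a p x := by
  simp only [objVal, fObj, h]

lemma monoVec_mem_momentCone (d : ℕ) {S : Set (Fin n → ℝ)} {x : Fin n → ℝ} (hx : x ∈ S) :
    monoVec d x ∈ momentCone d S :=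
  ⟨1, fun _ => 1, fun _ => x, fun _ => zero_le_one, fun _ => hx, by simp⟩

lemma fMax_le_fMom {m d : ℕ} (a : Fin m → ℝ) {p : Fin m → MvPolynomial (Fin n) ℝ}
    (hp : ∀ i, (p i).totalDegree ≤ 2 * d) (S : Set (Fin n → ℝ)) :
    fMax a p S ≤ fMom d a p S := by
  refine sSup_le ?_
  rintro _ ⟨x, hx, rfl⟩
  rw [← objVal_eq_fObj_of_pairing_eq a fun i => pairing_monoVec (hp i) x]
  exact le_sSup ⟨monoVec d x, ⟨monoVec_mem_momentCone d hx, monoVec_zero d x⟩, rfl⟩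

lemma pairing_eq_eval_of_flat {d l : ℕ} {p : MvPolynomial (Fin n) ℝ}
    (hp : p.totalDegree ≤ 2 * d) {lam : Fin l → ℝ} (hlam : ∑ j, lam j = 1)
    {v : Fin l → Fin n → ℝ} {x : Fin n → ℝ} (hflat : ∀ j, eval (v j) p = eval x p) :
    pairing p (∑ j, lam j • monoVec d (v j)) = eval x p := by
  simp only [pairing_sum_smul, pairing_monoVec hp, hflat, ← sum_mul, hlam, one_mul]

lemma objVal_le_fMax_of_flat {m d l : ℕ} (a : Fin m → ℝ)
    {p : Fin m → MvPolynomial (Fin n) ℝ} (hp : ∀ i, (p i).totalDegree ≤ 2 * d)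
    {S : Set (Fin n → ℝ)} {lam : Fin l → ℝ} {v : Fin l → Fin n → ℝ} (hv : ∀ j, v j ∈ S)
    (hz0 : (∑ j, lam j • monoVec d (v j)) 0 = 1)
    (hflat : ∀ i, ∀ j j', eval (v j) (p i) = eval (v j') (p i)) :
    objVal a p (∑ j, lam j • monoVec d (v j)) ≤ fMax a p S := by
  have hlam : ∑ j, lam j = 1 := by
    simpa only [Finset.sum_apply, Pi.smul_apply, monoVec_zero, smul_eq_mul, mul_one] using hz0
  obtain ⟨j₀, -, -⟩ := exists_ne_zero_of_sum_ne_zero (hlam ▸ one_ne_zero : ∑ j, lam j ≠ 0)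
  rw [objVal_eq_fObj_of_pairing_eq a
    fun i => pairing_eq_eval_of_flat (hp i) hlam fun j => hflat i j j₀]
  exact le_sSup ⟨v j₀, hv j₀, rfl⟩

end Moments

theorem fMom_eq_fMax_of_flat_maximizer_general
    {n m : ℕ} {ι : Type*} [DecidableEq ι]
    (E I : Finset ι)
    (c : ι → MvPolynomial (Fin n) ℝ)
    (K : Set (Fin n → ℝ))
    (a : Fin m → ℝ)
    (p : Fin m → MvPolynomial (Fin n) ℝ)
    (d : ℕ)
    (hd : d = (Finset.univ.sup fun i => ceilHalf (p i).totalDegree) ⊔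
      ((E ∪ I).sup fun j => ceilHalf (c j).totalDegree))
    (hmaximizer : ∃ (z : (Fin n →₀ ℕ) → ℝ) (l : ℕ) (lam : Fin l → ℝ)
        (v : Fin l → (Fin n → ℝ)),
      z 0 = 1 ∧ objVal a p z = fMom d a p K ∧
      (∀ j, 0 ≤ lam j) ∧ (∀ j, v j ∈ K) ∧
      z = ∑ j, lam j • monoVec d (v j) ∧
      ∀ i : Fin m, ∀ j j' : Fin l, eval (v j) (p i) = eval (v j') (p i)) :
    fMom d a p K = fMax a p K := by
  have hdeg : ∀ i, (p i).totalDegree ≤ 2 * d := fun i =>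
    le_two_mul_of_ceilHalf_le <| hd ▸ le_sup_of_le_left <|
      le_sup (f := fun i => ceilHalf (p i).totalDegree) (mem_univ i)
  obtain ⟨z, l, lam, v, hz0, hz_opt, -, hv, rfl, hflat⟩ := hmaximizer
  exact le_antisymm (hz_opt ▸ objVal_le_fMax_of_flat a hdeg hv hz0 hflat)
    (fMax_le_fMom a hdeg K)

/-- **Proposition 3.2(ii).**  If the convex relaxation has a
maximizer `z* = Σⱼ λⱼ [vⱼ*]_{2d}` with `λⱼ ≥ 0`, `vⱼ* ∈ K`, and
`pᵢ(v₁*) = ⋯ = pᵢ(v_l*)` for every `i`, then `f_mom = f_max`. -/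
theorem fMom_eq_fMax_of_flat_maximizer
    {n m : ℕ} (hm : 1 ≤ m) {ι : Type*} [DecidableEq ι]
    (E I : Finset ι) (hEI : Disjoint E I)
    (c : ι → MvPolynomial (Fin n) ℝ)
    (K : Set (Fin n → ℝ))
    (hK : K = {x | (∀ j ∈ E, eval x (c j) = 0) ∧ ∀ j ∈ I, 0 ≤ eval x (c j)})
    (hKne : K.Nonempty)
    (a : Fin m → ℝ) (ha : ∀ i, 0 < a i)
    (p : Fin m → MvPolynomial (Fin n) ℝ)
    (hp : ∀ i, ∀ x ∈ K, 0 ≤ eval x (p i))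
    (d : ℕ)
    (hd : d = (Finset.univ.sup fun i => ceilHalf (p i).totalDegree) ⊔
      ((E ∪ I).sup fun j => ceilHalf (c j).totalDegree))
    (hmaximizer : ∃ (z : (Fin n →₀ ℕ) → ℝ) (l : ℕ) (lam : Fin l → ℝ)
        (v : Fin l → (Fin n → ℝ)),
      z 0 = 1 ∧ objVal a p z = fMom d a p K ∧
      (∀ j, 0 ≤ lam j) ∧ (∀ j, v j ∈ K) ∧
      z = ∑ j, lam j • monoVec d (v j) ∧
      ∀ i : Fin m, ∀ j j' : Fin l, eval (v j) (p i) = eval (v j') (p i)) :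
    fMom d a p K = fMax a p K :=
  fMom_eq_fMax_of_flat_maximizer_general E I c K a p d hd hmaximizer

end
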